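/- Let C ≤ F_q^n be a non-degenerate linear code. For all 1 ≤ i ≤ n and 1 ≤ j ≤ n, the quantity W_i^j(C) is determined by the numbers W_a^b(C^⊥) via the identity: W_i^j(C) = (1/|C^⊥|) · [ K_{i,0,q}·(1 − 1/q) − (K_{i,1,q}/q)·(q − 1 + W_2^j(C^⊥)) + Σ_{s=2}^n K_{i,s,q} · ( Σ_{t=1}^n W_s^t(C^⊥)/s − (1/q)·( (q−1)·( Σ_{t=1}^n W_{s−1}^t(C^⊥)/(s−1) − W_{s−1}^j(C^⊥) ) + Σ_{t=1}^n W_s^t(C^⊥)/s + W_{s+1}^j(C^⊥) + (q−2)·W_s^j(C^⊥) ) ) ], where by convention W_{n+1}^j(C^⊥) = 0 for all 1 ≤ j ≤ n. -/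

import Mathlib

set_option linter.unusedSectionVars false

open Finset

/-- The dual code of a linear code `C ≤ F_q^n`. -/
def dualCode {F : Type} [Field F] {n : ℕ} (C : Submodule F (Fin n → F)) :
    Submodule F (Fin n → F) where
  carrier := {y | ∀ x ∈ C, ∑ i, x i * y i = 0}
  add_mem' := by
    intro a b ha hb x hx
    simp only [Set.mem_setOf_eq] at *
    simp [Pi.add_apply, mul_add, Finset.sum_add_distrib, ha x hx, hb x hx]
  zero_mem' := by intro x hx; simp
  smul_mem' := by
    intro c a ha x hx
    simp only [Set.mem_setOf_eq] at *
    simp [Pi.smul_apply, smul_eq_mul, mul_left_comm, ← Finset.mul_sum, ha x hx]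

section LA

variable {F : Type} [Field F] [Fintype F] [DecidableEq F] {n : ℕ}

lemma mem_dualCode {C : Submodule F (Fin n → F)} {y : Fin n → F} :
    y ∈ dualCode C ↔ ∀ x ∈ C, ∑ i, x i * y i = 0 := Iff.rfl

/-- `y ↦ (x ↦ ∑ x i * y i)` as a linear map to the dual. -/
def toDualM (n : ℕ) (F : Type) [Field F] : (Fin n → F) →ₗ[F] Module.Dual F (Fin n → F) where
  toFun y :=
    { toFun := fun x => ∑ i, x i * y i
      map_add' := fun a b => by simp [add_mul, Finset.sum_add_distrib]
      map_smul' := fun c a => by simp [Finset.mul_sum, mul_assoc] }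
  map_add' a b := by
    ext x; simp [mul_add, Finset.sum_add_distrib]
  map_smul' c a := by
    ext x; simp [Finset.mul_sum, mul_left_comm]

lemma toDualM_surj : Function.Surjective (toDualM n F) := by
  intro g
  refine ⟨fun i => g (Pi.single i 1), LinearMap.ext fun x => ?_⟩
  have hg := LinearMap.pi_apply_eq_sum_univ g x
  have h0 : (toDualM n F) (fun i => g (Pi.single i 1)) x = ∑ i, x i * g (Pi.single i 1) := rfl
  rw [h0, hg]
  refine Finset.sum_congr rfl fun k _ => ?_
  rw [smul_eq_mul]
  have h1 : (Pi.single k 1 : Fin n → F) = fun j => if k = j then 1 else 0 := by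
    funext j
    simp [Pi.single_apply, eq_comm]
  rw [h1]

lemma finrank_add_finrank_dualCode (C : Submodule F (Fin n → F)) :
    Module.finrank F C + Module.finrank F (dualCode C) = n := by
  classical
  let φ : (Fin n → F) →ₗ[F] Module.Dual F C := C.dualRestrict.comp (toDualM n F)
  have hker : LinearMap.ker φ = dualCode C := by
    ext y
    simp only [LinearMap.mem_ker, LinearMap.ext_iff, mem_dualCode]
    constructor
    · intro h x hx
      simpa [φ, Submodule.dualRestrict_apply, toDualM] using h ⟨x, hx⟩
    · intro h x
      simpa [φ, Submodule.dualRestrict_apply, toDualM] using h x.1 x.2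
  have hsurj : Function.Surjective φ :=
    (Subspace.dualRestrict_surjective).comp toDualM_surj
  have hrank := LinearMap.finrank_range_add_finrank_ker φ
  rw [LinearMap.range_eq_top.mpr hsurj, hker] at hrank
  have h1 : Module.finrank F (⊤ : Submodule F (Module.Dual F C)) =
      Module.finrank F C := by
    rw [finrank_top]; exact Subspace.dual_finrank_eq
  rw [h1] at hrank
  simpa [Module.finrank_fintype_fun_eq_card] using hrank

lemma card_submodule (U : Submodule F (Fin n → F)) :
    Nat.card U = Fintype.card F ^ Module.finrank F U := by
  have : Fintype ↥U := Fintype.ofFinite _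
  rw [Nat.card_eq_fintype_card]
  exact Module.card_eq_pow_finrank

lemma le_dualCode_dualCode (C : Submodule F (Fin n → F)) : C ≤ dualCode (dualCode C) := by
  intro x hx y hy
  rw [Finset.sum_congr rfl (fun i _ => mul_comm (y i) (x i))]
  exact hy x hx

lemma dualCode_dualCode (C : Submodule F (Fin n → F)) : dualCode (dualCode C) = C := by
  have h1 := finrank_add_finrank_dualCode C
  have h2 := finrank_add_finrank_dualCode (dualCode C)
  exact (Submodule.eq_of_le_of_finrank_le (le_dualCode_dualCode C) (by omega)).symm

lemma dualCode_sup (A B : Submodule F (Fin n → F)) :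
    dualCode (A ⊔ B) = dualCode A ⊓ dualCode B := by
  ext y
  simp only [Submodule.mem_inf, mem_dualCode]
  constructor
  · intro h
    exact ⟨fun x hx => h x (Submodule.mem_sup_left hx),
           fun x hx => h x (Submodule.mem_sup_right hx)⟩
  · rintro ⟨hA, hB⟩ x hx
    obtain ⟨a, ha, b, hb, rfl⟩ := Submodule.mem_sup.mp hx
    have : ∑ i, (a + b) i * y i = (∑ i, a i * y i) + ∑ i, b i * y i := by
      simp [add_mul, Finset.sum_add_distrib]
    rw [this, hA a ha, hB b hb, add_zero]

/-- The subspace of vectors supported inside `S`. -/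
def coordSub (S : Finset (Fin n)) (F : Type) [Field F] : Submodule F (Fin n → F) where
  carrier := {x | ∀ i ∉ S, x i = 0}
  add_mem' := by intro a b ha hb i hi; simp [ha i hi, hb i hi]
  zero_mem' := by intro i _; rfl
  smul_mem' := by intro c a ha i hi; simp [ha i hi]

lemma mem_coordSub {S : Finset (Fin n)} {x : Fin n → F} :
    x ∈ coordSub S F ↔ ∀ i ∉ S, x i = 0 := Iff.rfl

/-- `coordSub S F` is isomorphic to `S → F`. -/
noncomputable def coordSubEquiv (S : Finset (Fin n)) :
    (coordSub S F) ≃ₗ[F] (↥S → F) where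
  toFun x := fun i => x.1 i.1
  map_add' a b := rfl
  map_smul' c a := rfl
  invFun z := ⟨fun i => if h : i ∈ S then z ⟨i, h⟩ else 0, by
    intro i hi; simp [hi]⟩
  left_inv := by
    rintro ⟨x, hx⟩
    ext i
    by_cases h : i ∈ S <;> simp [h, hx i]
  right_inv := by
    intro z
    ext ⟨i, hi⟩
    simp [hi]

lemma finrank_coordSub (S : Finset (Fin n)) :
    Module.finrank F (coordSub S F) = S.card := by
  rw [(coordSubEquiv S).finrank_eq, Module.finrank_fintype_fun_eq_card, Fintype.card_coe]

lemma dualCode_coordSub (S : Finset (Fin n)) :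
    dualCode (coordSub S F) = coordSub Sᶜ F := by
  ext y
  simp only [mem_dualCode, mem_coordSub, Finset.mem_compl, not_not]
  constructor
  · intro h i hi
    have hs : (Pi.single i 1 : Fin n → F) ∈ coordSub S F := by
      intro k hk
      have : k ≠ i := fun h' => hk (h' ▸ hi)
      simp [Pi.single_apply, this]
    have := h _ hs
    simpa [Pi.single_apply] using this
  · intro h x hx
    refine Finset.sum_eq_zero fun k _ => ?_
    by_cases hk : k ∈ S
    · rw [h k hk, mul_zero]
    · rw [hx k hk, zero_mul]

/-- The key duality counting identity. -/
lemma key_counting (C : Submodule F (Fin n → F)) (S : Finset (Fin n)) :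
    Nat.card (dualCode C) * Nat.card (C ⊓ coordSub S F : Submodule F (Fin n → F)) =
      Fintype.card F ^ S.card *
        Nat.card (dualCode C ⊓ coordSub Sᶜ F : Submodule F (Fin n → F)) := by
  have h1 := Submodule.finrank_sup_add_finrank_inf_eq C (coordSub S F)
  rw [finrank_coordSub] at h1
  have h2 := finrank_add_finrank_dualCode (C ⊔ coordSub S F)
  rw [dualCode_sup, dualCode_coordSub] at h2
  have h4 := finrank_add_finrank_dualCode C
  rw [card_submodule, card_submodule, card_submodule, ← pow_add, ← pow_add]
  congr 1
  omega

end LA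
open Finset

section GenCount
variable {α : Type} [Fintype α] [DecidableEq α]

lemma card_supersets (A : Finset α) {i : ℕ} (h : A.card ≤ i) :
    ((univ.powersetCard i).filter (fun T => A ⊆ T)).card
      = (Fintype.card α - A.card).choose (i - A.card) := by
  rw [← Finset.card_compl A, ← Finset.card_powersetCard]
  apply Finset.card_bij' (fun T _ => T \ A) (fun U _ => A ∪ U)
  · intro T hT
    simp only [mem_filter, mem_powersetCard_univ] at hT
    rw [Finset.mem_powersetCard]
    constructor
    · intro x hx
      rw [Finset.mem_sdiff] at hx
      exact Finset.mem_compl.mpr hx.2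
    · rw [Finset.card_sdiff_of_subset hT.2, hT.1]
  · intro U hU
    rw [Finset.mem_powersetCard] at hU
    simp only [mem_filter, mem_powersetCard_univ]
    have hdisj : Disjoint A U := by
      rw [Finset.disjoint_left]
      intro a ha hau
      exact (Finset.mem_compl.mp (hU.1 hau)) ha
    constructor
    · rw [Finset.card_union_of_disjoint hdisj, hU.2]
      omega
    · exact Finset.subset_union_left
  · intro T hT
    simp only [mem_filter, mem_powersetCard_univ] at hT
    exact Finset.union_sdiff_of_subset hT.2
  · intro U hU
    rw [Finset.mem_powersetCard] at hU
    apply Finset.union_sdiff_cancel_left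
    rw [Finset.disjoint_left]
    intro a ha hau
    exact (Finset.mem_compl.mp (hU.1 hau)) ha

lemma card_supersets_zero (A : Finset α) {i : ℕ} (h : i < A.card) :
    ((univ.powersetCard i).filter (fun T => A ⊆ T)).card = 0 := by
  rw [Finset.card_eq_zero, Finset.eq_empty_iff_forall_notMem]
  intro T hT
  simp only [mem_filter, mem_powersetCard_univ] at hT
  have := Finset.card_le_card hT.2
  omega

/-- Sum over subsets `S ⊆ T` containing a fixed `R ⊆ T` of `(-1)^(|T|-|S|)`. -/
lemma sum_neg_one_pow_sandwich {R T : Finset α} (hRT : R ⊆ T) :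
    (∑ S ∈ T.powerset.filter (fun S => R ⊆ S), (-1 : ℚ) ^ (T.card - S.card))
      = if R = T then 1 else 0 := by
  have step1 : (∑ S ∈ T.powerset.filter (fun S => R ⊆ S), (-1 : ℚ) ^ (T.card - S.card))
      = ∑ U ∈ (T \ R).powerset, (-1 : ℚ) ^ (T.card - (R ∪ U).card) := by
    apply Finset.sum_bij' (fun S _ => S \ R) (fun U _ => R ∪ U)
    · intro S hS
      simp only [mem_filter, Finset.mem_powerset] at hS
      rw [Finset.mem_powerset]
      intro a ha
      rw [Finset.mem_sdiff] at ha ⊢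
      exact ⟨hS.1 ha.1, ha.2⟩
    · intro U hU
      simp only [mem_filter, Finset.mem_powerset]
      rw [Finset.mem_powerset] at hU
      exact ⟨Finset.union_subset hRT (hU.trans Finset.sdiff_subset),
        Finset.subset_union_left⟩
    · intro S hS
      simp only [mem_filter, Finset.mem_powerset] at hS
      exact Finset.union_sdiff_of_subset hS.2
    · intro U hU
      rw [Finset.mem_powerset] at hU
      apply Finset.union_sdiff_cancel_left
      rw [Finset.disjoint_left]
      intro a ha haU
      exact (Finset.mem_sdiff.mp (hU haU)).2 ha
    · intro S hS
      simp only [mem_filter, Finset.mem_powerset] at hS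
      rw [Finset.union_sdiff_of_subset hS.2]
  rw [step1]
  have key : ∀ S ∈ (T \ R).powerset, (R ∪ S).card = R.card + S.card := by
    intro S hS
    rw [Finset.mem_powerset] at hS
    refine Finset.card_union_of_disjoint ?_
    rw [Finset.disjoint_left]
    intro a ha haS
    exact (Finset.mem_sdiff.mp (hS haS)).2 ha
  have hcard : ∀ U ∈ (T \ R).powerset,
      (-1 : ℚ) ^ (T.card - (R ∪ U).card) = (-1) ^ (T \ R).card * (-1) ^ U.card := by
    intro U hU
    rw [key U hU]
    rw [Finset.mem_powerset] at hU
    have h1 : U.card ≤ (T \ R).card := Finset.card_le_card hU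
    have h2 : (T \ R).card = T.card - R.card := Finset.card_sdiff_of_subset hRT
    have h3 : R.card ≤ T.card := Finset.card_le_card hRT
    have h4 : T.card - (R.card + U.card) + U.card = (T \ R).card := by omega
    have he : ((-1 : ℚ) ^ U.card) * ((-1 : ℚ) ^ U.card) = 1 := by
      rw [← pow_add, Even.neg_one_pow ⟨U.card, by ring⟩]
    calc (-1 : ℚ) ^ (T.card - (R.card + U.card))
        = (-1 : ℚ) ^ (T.card - (R.card + U.card)) * ((-1) ^ U.card * (-1) ^ U.card) := by
          rw [he, mul_one]
      _ = (-1 : ℚ) ^ (T \ R).card * (-1) ^ U.card := by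
          rw [← mul_assoc, ← pow_add, h4]
  rw [Finset.sum_congr rfl hcard, ← Finset.mul_sum]
  have hz := Finset.sum_powerset_neg_one_pow_card (x := T \ R)
  have hcast : (∑ m ∈ (T \ R).powerset, (-1 : ℚ) ^ m.card)
      = (((∑ m ∈ (T \ R).powerset, (-1 : ℤ) ^ m.card) : ℤ) : ℚ) := by push_cast; rfl
  rw [hcast, hz]
  by_cases hRT' : R = T
  · subst hRT'
    simp
  · have hne : T \ R ≠ ∅ := by
      intro h
      refine hRT' (Finset.Subset.antisymm hRT ?_)
      intro a ha
      by_contra hc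
      have : a ∈ T \ R := Finset.mem_sdiff.mpr ⟨ha, hc⟩
      simp [h] at this
    rw [if_neg hne, if_neg hRT']
    simp

end GenCount
/-- `Wj C i j` is the number of codewords of `C` of Hamming weight `i` whose support
contains `j`. Note `Wj C (n+1) j = 0` automatically, encoding the convention
`W_{n+1}^j(C) = 0`. -/
noncomputable def Wj {F : Type} [Field F] [DecidableEq F] {n : ℕ}
    (C : Submodule F (Fin n → F)) (i : ℕ) (j : Fin n) : ℕ :=
  {x : Fin n → F | x ∈ C ∧ hammingNorm x = i ∧ x j ≠ 0}.ncard

/-- The Krawtchouk coefficient `K_{i,s,q} = ∑_{t=0}^i C(n−t, i−t)·C(n−s, t)·(−1)^{i−t}·q^t`. -/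
def Kraw (q n i s : ℕ) : ℤ :=
  ∑ t ∈ Finset.range (i + 1),
    ((n - t).choose (i - t) : ℤ) * ((n - s).choose t : ℤ) * (-1 : ℤ) ^ (i - t) * (q : ℤ) ^ t

/-- guarded binomial coefficient -/
def cIn (n i t : ℕ) : ℕ := if t ≤ i then (n - t).choose (i - t) else 0

/-- The polynomial `P_s = ∑_{t<i} (-1)^(i-t) q^t C(n-s,t) C(n-1-t, i-1-t)`. -/
def PPQ (q n i s : ℕ) : ℚ :=
  ∑ t ∈ Finset.range i,
    (-1 : ℚ) ^ (i - t) * (q : ℚ) ^ t * ((n - s).choose t : ℚ) * ((n - 1 - t).choose (i - 1 - t) : ℚ)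

section Grouping

open Finset

variable {n : ℕ}

lemma sum_choose_cIn (q n i s : ℕ) (hi : i ≤ n) :
    ∑ t ∈ range (n - s + 1),
        (((n - s).choose t : ℚ)) * ((cIn n i (t + 1) : ℚ) * (-1 : ℚ) ^ (i - t) * (q : ℚ) ^ t)
      = PPQ q n i s := by
  have hsub : range (n - s + 1) ⊆ range (n + 1) := by
    apply Finset.range_subset_range.mpr; omega
  rw [Finset.sum_subset hsub]
  swap
  · intro t ht hnt
    simp only [Finset.mem_range] at ht hnt
    have : n - s < t := by omega
    rw [Nat.choose_eq_zero_of_lt this]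
    simp
  rw [PPQ]
  have hsub2 : range i ⊆ range (n + 1) := by
    apply Finset.range_subset_range.mpr; omega
  rw [← Finset.sum_subset hsub2]
  swap
  · intro t ht hnt
    simp only [Finset.mem_range] at ht hnt
    have : ¬ (t + 1 ≤ i) := by omega
    rw [cIn, if_neg this]
    push_cast
    ring
  refine Finset.sum_congr rfl fun t ht => ?_
  simp only [Finset.mem_range] at ht
  rw [cIn, if_pos (by omega : t + 1 ≤ i)]
  have e1 : n - (t + 1) = n - 1 - t := by omega
  have e2 : i - (t + 1) = i - 1 - t := by omega
  rw [e1, e2]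
  ring

lemma sum_choose_cIn' (q n i s : ℕ) (hi : i ≤ n) :
    ∑ t ∈ range (n - s + 1),
        (((n - s).choose t : ℚ)) * ((cIn n i (t + 1) : ℚ) * (-1 : ℚ) ^ (i - (t + 1)) * (q : ℚ) ^ (t + 1))
      = -(q : ℚ) * PPQ q n i s := by
  rw [← sum_choose_cIn q n i s hi, Finset.mul_sum]
  refine Finset.sum_congr rfl fun t ht => ?_
  by_cases hti : t + 1 ≤ i
  · have hsign : (-1 : ℚ) ^ (i - t) = -(-1 : ℚ) ^ (i - (t + 1)) := by
      have : i - t = (i - (t + 1)) + 1 := by omega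
      rw [this, pow_succ]
      ring
    rw [hsign, pow_succ]
    ring
  · rw [cIn, if_neg hti]
    push_cast
    ring

end Grouping

section CodeCount

open Finset
open scoped Classical

variable {F : Type} [Field F] [Fintype F] [DecidableEq F] {n : ℕ}

def suppF (x : Fin n → F) : Finset (Fin n) := {i | x i ≠ 0}

lemma mem_suppF {x : Fin n → F} {i : Fin n} : i ∈ suppF x ↔ x i ≠ 0 := by
  simp [suppF]

lemma card_suppF (x : Fin n → F) : (suppF x).card = hammingNorm x := rfl

lemma suppF_subset_iff {x : Fin n → F} {S : Finset (Fin n)} :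
    suppF x ⊆ S ↔ ∀ i ∉ S, x i = 0 := by
  constructor
  · intro h i hi
    by_contra hc
    exact hi (h (mem_suppF.mpr hc))
  · intro h i hi
    by_contra hc
    exact (mem_suppF.mp hi) (h i hc)

lemma ncard_setOf_eq (p : (Fin n → F) → Prop) [DecidablePred p] :
    {x : Fin n → F | p x}.ncard = #(univ.filter p) := by
  rw [Set.ncard_eq_toFinset_card', Set.toFinset_setOf]

lemma Wj_eq_card (C : Submodule F (Fin n → F)) (i : ℕ) (j : Fin n) :
    Wj C i j = #(univ.filter fun x => x ∈ C ∧ hammingNorm x = i ∧ x j ≠ 0) := by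
  rw [Wj, ncard_setOf_eq]

lemma natcard_eq_filter (U : Submodule F (Fin n → F)) :
    Nat.card U = #(univ.filter fun x => x ∈ U) := by
  have h0 : Nat.card U = Nat.card {x : Fin n → F | x ∈ U} := rfl
  rw [h0, Nat.card_coe_set_eq, ncard_setOf_eq]

noncomputable def cntE (C : Submodule F (Fin n → F)) (T : Finset (Fin n)) : ℕ :=
  #(univ.filter fun x => x ∈ C ∧ suppF x = T)

noncomputable def cntN (C : Submodule F (Fin n → F)) (S : Finset (Fin n)) : ℕ :=
  #(univ.filter fun x => x ∈ C ∧ suppF x ⊆ S)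

noncomputable def cntM (U : Submodule F (Fin n → F)) (S : Finset (Fin n)) : ℕ :=
  #(univ.filter fun y => y ∈ U ∧ ∀ k ∈ S, y k = 0)

noncomputable def cntDz (U : Submodule F (Fin n → F)) (s : ℕ) (j : Fin n) : ℕ :=
  #(univ.filter fun y => y ∈ U ∧ hammingNorm y = s ∧ y j = 0)

lemma cntN_eq (C : Submodule F (Fin n → F)) (S : Finset (Fin n)) :
    cntN C S = Nat.card (C ⊓ coordSub S F : Submodule F (Fin n → F)) := by
  rw [natcard_eq_filter, cntN]
  congr 1
  apply Finset.filter_congr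
  intro x _
  rw [Submodule.mem_inf, mem_coordSub, suppF_subset_iff]

lemma cntM_eq (U : Submodule F (Fin n → F)) (S : Finset (Fin n)) :
    cntM U S = Nat.card (U ⊓ coordSub Sᶜ F : Submodule F (Fin n → F)) := by
  rw [natcard_eq_filter, cntM]
  congr 1
  apply Finset.filter_congr
  intro x _
  rw [Submodule.mem_inf, mem_coordSub]
  constructor
  · rintro ⟨h1, h2⟩
    exact ⟨h1, fun i hi => h2 i (by simpa using hi)⟩
  · rintro ⟨h1, h2⟩
    exact ⟨h1, fun i hi => h2 i (by simpa using hi)⟩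

lemma key_cnt (C : Submodule F (Fin n → F)) (S : Finset (Fin n)) :
    Nat.card (dualCode C) * cntN C S = Fintype.card F ^ S.card * cntM (dualCode C) S := by
  rw [cntN_eq, cntM_eq]
  exact key_counting C S

lemma Wj_eq_sum_cntE (C : Submodule F (Fin n → F)) (i : ℕ) (j : Fin n) :
    Wj C i j = ∑ T ∈ (univ.powersetCard i).filter (fun T => j ∈ T), cntE C T := by
  rw [Wj_eq_card]
  rw [Finset.card_eq_sum_card_fiberwise
    (f := suppF) (t := (univ.powersetCard i).filter (fun T => j ∈ T)) ?_]
  · refine Finset.sum_congr rfl fun T hT => ?_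
    simp only [mem_filter, mem_powersetCard_univ] at hT
    rw [cntE, Finset.filter_filter]
    congr 1
    apply Finset.filter_congr
    intro x _
    constructor
    · rintro ⟨⟨h1, _, _⟩, h4⟩
      exact ⟨h1, h4⟩
    · rintro ⟨h1, h4⟩
      refine ⟨⟨h1, ?_, ?_⟩, h4⟩
      · rw [← card_suppF, h4, hT.1]
      · rw [← mem_suppF, h4]; exact hT.2
  · intro x hx
    simp only [Finset.mem_coe, mem_filter, mem_univ, true_and] at hx
    simp only [Finset.mem_coe, mem_filter, mem_powersetCard_univ]
    exact ⟨by rw [card_suppF, hx.2.1], mem_suppF.mpr hx.2.2⟩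

lemma cntN_eq_sum (C : Submodule F (Fin n → F)) (S : Finset (Fin n)) :
    cntN C S = ∑ R ∈ S.powerset, cntE C R := by
  rw [cntN]
  rw [Finset.card_eq_sum_card_fiberwise (f := suppF) (t := S.powerset) ?_]
  · refine Finset.sum_congr rfl fun R hR => ?_
    rw [cntE, Finset.filter_filter]
    congr 1
    apply Finset.filter_congr
    intro x _
    constructor
    · rintro ⟨⟨h1, _⟩, h3⟩
      exact ⟨h1, h3⟩
    · rintro ⟨h1, h3⟩
      rw [Finset.mem_powerset] at hR
      exact ⟨⟨h1, h3 ▸ hR⟩, h3⟩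
  · intro x hx
    simp only [Finset.mem_coe, mem_filter, mem_univ, true_and] at hx
    rw [Finset.mem_coe, Finset.mem_powerset]
    exact hx.2

lemma cntE_inversion (C : Submodule F (Fin n → F)) (T : Finset (Fin n)) :
    (cntE C T : ℚ)
      = ∑ S ∈ T.powerset, (-1 : ℚ) ^ (T.card - S.card) * (cntN C S : ℚ) := by
  have hN : ∀ S, (cntN C S : ℚ) = ∑ R ∈ S.powerset, (cntE C R : ℚ) := by
    intro S
    rw [cntN_eq_sum]
    push_cast
    rfl
  rw [Finset.sum_congr rfl (fun S _ => by rw [hN S, Finset.mul_sum])]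
  rw [Finset.sum_comm' (t' := T.powerset)
    (s' := fun R => T.powerset.filter (fun S => R ⊆ S)) ?_]
  swap
  · intro S R
    simp only [Finset.mem_powerset, mem_filter]
    constructor
    · rintro ⟨h1, h2⟩
      exact ⟨⟨h1, h2⟩, h2.trans h1⟩
    · rintro ⟨⟨h1, h2⟩, _⟩
      exact ⟨h1, h2⟩
  symm
  calc ∑ R ∈ T.powerset, ∑ S ∈ T.powerset.filter (fun S => R ⊆ S),
          (-1 : ℚ) ^ (T.card - S.card) * (cntE C R : ℚ)
      = ∑ R ∈ T.powerset, (if R = T then 1 else 0) * (cntE C R : ℚ) := by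
        refine Finset.sum_congr rfl fun R hR => ?_
        rw [← Finset.sum_mul, sum_neg_one_pow_sandwich (Finset.mem_powerset.mp hR)]
    _ = (cntE C T : ℚ) := by
        rw [Finset.sum_congr rfl (fun R _ => by rw [ite_mul, one_mul, zero_mul] :
          ∀ R ∈ T.powerset, (if R = T then 1 else 0) * (cntE C R : ℚ)
            = if R = T then (cntE C R : ℚ) else 0)]
        rw [Finset.sum_ite_eq' T.powerset T (fun R => (cntE C R : ℚ))]
        simp

end CodeCount
section Master

open Finset
open scoped Classical

variable {F : Type} [Field F] [Fintype F] [DecidableEq F] {n : ℕ}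

/-- number of `i`-subsets of `Fin n` containing `j` and a given `S` -/
noncomputable def cT (n i : ℕ) (j : Fin n) (S : Finset (Fin n)) : ℕ :=
  #(((univ.powersetCard i).filter (fun T => j ∈ T)).filter (fun T => S ⊆ T))

lemma cT_in {i : ℕ} {j : Fin n} {S : Finset (Fin n)} (hj : j ∈ S) :
    cT n i j S = cIn n i S.card := by
  rw [cT, Finset.filter_filter]
  have h1 : ∀ T : Finset (Fin n), (j ∈ T ∧ S ⊆ T) ↔ S ⊆ T := by
    intro T
    exact ⟨fun h => h.2, fun h => ⟨h hj, h⟩⟩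
  rw [Finset.filter_congr (fun T _ => h1 T)]
  by_cases hc : S.card ≤ i
  · rw [card_supersets S hc, cIn, if_pos hc, Fintype.card_fin]
  · rw [card_supersets_zero S (by omega), cIn, if_neg hc]

lemma cT_out {i : ℕ} {j : Fin n} {S : Finset (Fin n)} (hj : j ∉ S) :
    cT n i j S = cIn n i (S.card + 1) := by
  rw [cT, Finset.filter_filter]
  have h1 : ∀ T : Finset (Fin n), (j ∈ T ∧ S ⊆ T) ↔ insert j S ⊆ T := by
    intro T
    rw [Finset.insert_subset_iff]
  rw [Finset.filter_congr (fun T _ => h1 T)]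
  have hcard : (insert j S).card = S.card + 1 := Finset.card_insert_of_notMem hj
  by_cases hc : S.card + 1 ≤ i
  · rw [card_supersets (insert j S) (by omega), cIn, if_pos hc, Fintype.card_fin, hcard]
  · rw [card_supersets_zero (insert j S) (by omega), cIn, if_neg hc]

lemma G_in {i : ℕ} (hi : i ≤ n) (q : ℕ) (j : Fin n) (V : Finset (Fin n)) (hj : j ∈ V) :
    ∑ S ∈ Vᶜ.powerset, (cT n i j S : ℚ) * (-1 : ℚ) ^ (i - S.card) * (q : ℚ) ^ S.card
      = PPQ q n i V.card := by
  have hstep : ∀ S ∈ Vᶜ.powerset,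
      (cT n i j S : ℚ) * (-1 : ℚ) ^ (i - S.card) * (q : ℚ) ^ S.card
        = (cIn n i (S.card + 1) : ℚ) * (-1 : ℚ) ^ (i - S.card) * (q : ℚ) ^ S.card := by
    intro S hS
    rw [Finset.mem_powerset] at hS
    have hjS : j ∉ S := fun h => by
      have := hS h
      rw [Finset.mem_compl] at this
      exact this hj
    rw [cT_out hjS]
  rw [Finset.sum_congr rfl hstep]
  rw [Finset.sum_powerset_apply_card
    (f := fun t => (cIn n i (t + 1) : ℚ) * (-1 : ℚ) ^ (i - t) * (q : ℚ) ^ t)]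
  rw [Finset.card_compl, Fintype.card_fin]
  rw [← sum_choose_cIn q n i V.card hi]
  simp [nsmul_eq_mul]

lemma G_out {i : ℕ} (hi : i ≤ n) (q : ℕ) (j : Fin n) (V : Finset (Fin n)) (hj : j ∉ V) :
    ∑ S ∈ Vᶜ.powerset, (cT n i j S : ℚ) * (-1 : ℚ) ^ (i - S.card) * (q : ℚ) ^ S.card
      = (1 - (q : ℚ)) * PPQ q n i (V.card + 1) := by
  have hjc : j ∈ Vᶜ := Finset.mem_compl.mpr hj
  have hV : Vᶜ = insert j (Vᶜ.erase j) := (Finset.insert_erase hjc).symm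
  rw [hV, Finset.sum_powerset_insert (Finset.notMem_erase j _)]
  have hWcard : (Vᶜ.erase j).card = n - (V.card + 1) := by
    rw [Finset.card_erase_of_mem hjc, Finset.card_compl, Fintype.card_fin]
    have : V.card < n := by
      by_contra hc
      have h1 : V.card = n := le_antisymm (by
        simpa [Fintype.card_fin] using Finset.card_le_univ V) (by omega)
      have h2 : V = univ := Finset.eq_univ_of_card V (by simpa [Fintype.card_fin] using h1)
      exact hj (h2 ▸ Finset.mem_univ j)
    omega
  have piece1 : ∑ S ∈ (Vᶜ.erase j).powerset,
      (cT n i j S : ℚ) * (-1 : ℚ) ^ (i - S.card) * (q : ℚ) ^ S.card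
        = PPQ q n i (V.card + 1) := by
    have hstep : ∀ S ∈ (Vᶜ.erase j).powerset,
        (cT n i j S : ℚ) * (-1 : ℚ) ^ (i - S.card) * (q : ℚ) ^ S.card
          = (cIn n i (S.card + 1) : ℚ) * (-1 : ℚ) ^ (i - S.card) * (q : ℚ) ^ S.card := by
      intro S hS
      rw [Finset.mem_powerset] at hS
      have hjS : j ∉ S := fun h => Finset.notMem_erase j _ (hS h)
      rw [cT_out hjS]
    rw [Finset.sum_congr rfl hstep]
    rw [Finset.sum_powerset_apply_card
      (f := fun t => (cIn n i (t + 1) : ℚ) * (-1 : ℚ) ^ (i - t) * (q : ℚ) ^ t)]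
    rw [hWcard]
    rw [← sum_choose_cIn q n i (V.card + 1) hi]
    simp [nsmul_eq_mul]
  have piece2 : ∑ S ∈ (Vᶜ.erase j).powerset,
      (cT n i j (insert j S) : ℚ) * (-1 : ℚ) ^ (i - (insert j S).card)
        * (q : ℚ) ^ (insert j S).card
        = -(q : ℚ) * PPQ q n i (V.card + 1) := by
    have hstep : ∀ S ∈ (Vᶜ.erase j).powerset,
        (cT n i j (insert j S) : ℚ) * (-1 : ℚ) ^ (i - (insert j S).card)
          * (q : ℚ) ^ (insert j S).card
          = (cIn n i (S.card + 1) : ℚ) * (-1 : ℚ) ^ (i - (S.card + 1))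
            * (q : ℚ) ^ (S.card + 1) := by
      intro S hS
      rw [Finset.mem_powerset] at hS
      have hjS : j ∉ S := fun h => Finset.notMem_erase j _ (hS h)
      rw [cT_in (Finset.mem_insert_self j S), Finset.card_insert_of_notMem hjS]
    rw [Finset.sum_congr rfl hstep]
    rw [Finset.sum_powerset_apply_card
      (f := fun t => (cIn n i (t + 1) : ℚ) * (-1 : ℚ) ^ (i - (t + 1)) * (q : ℚ) ^ (t + 1))]
    rw [hWcard]
    rw [← sum_choose_cIn' q n i (V.card + 1) hi]
    simp [nsmul_eq_mul]
  rw [piece1, piece2]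
  ring

end Master
section MasterMain

open Finset
open scoped Classical

variable {F : Type} [Field F] [Fintype F] [DecidableEq F] {n : ℕ}

lemma hammingNorm_le_n (x : Fin n → F) : hammingNorm x ≤ n := by
  rw [← card_suppF]
  simpa [Fintype.card_fin] using Finset.card_le_univ (suppF x)

lemma master (C : Submodule F (Fin n → F)) {i : ℕ} (hi : i ≤ n) (j : Fin n) :
    (Nat.card (dualCode C) : ℚ) * (Wj C i j : ℚ)
      = ∑ s ∈ range (n + 1),
          ((Wj (dualCode C) s j : ℚ) * PPQ (Fintype.card F) n i s
            + (cntDz (dualCode C) s j : ℚ)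
              * ((1 - (Fintype.card F : ℚ)) * PPQ (Fintype.card F) n i (s + 1))) := by
  have h1 : (Nat.card (dualCode C) : ℚ) * (Wj C i j : ℚ)
      = ∑ T ∈ (univ.powersetCard i).filter (fun T => j ∈ T), ∑ S ∈ T.powerset,
          (-1 : ℚ) ^ (i - S.card) * (Fintype.card F : ℚ) ^ S.card
            * (cntM (dualCode C) S : ℚ) := by
    rw [Wj_eq_sum_cntE C i j]
    push_cast
    rw [Finset.mul_sum]
    refine Finset.sum_congr rfl fun T hT => ?_
    have hTc : T.card = i := by
      simp only [mem_filter, mem_powersetCard_univ] at hT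
      exact hT.1
    rw [cntE_inversion C T, Finset.mul_sum]
    refine Finset.sum_congr rfl fun S hS => ?_
    have hkey : ((Nat.card (dualCode C) : ℚ)) * (cntN C S : ℚ)
        = (Fintype.card F : ℚ) ^ S.card * (cntM (dualCode C) S : ℚ) := by
      have := key_cnt C S
      exact_mod_cast Nat.cast_inj.mpr this
    calc (Nat.card (dualCode C) : ℚ) * ((-1 : ℚ) ^ (T.card - S.card) * (cntN C S : ℚ))
        = (-1 : ℚ) ^ (T.card - S.card)
            * ((Nat.card (dualCode C) : ℚ) * (cntN C S : ℚ)) := by ring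
      _ = (-1 : ℚ) ^ (i - S.card) * (Fintype.card F : ℚ) ^ S.card
            * (cntM (dualCode C) S : ℚ) := by
          rw [hkey, hTc]; ring
  rw [h1]
  have h2 : ∑ T ∈ (univ.powersetCard i).filter (fun T => j ∈ T), ∑ S ∈ T.powerset,
        (-1 : ℚ) ^ (i - S.card) * (Fintype.card F : ℚ) ^ S.card
          * (cntM (dualCode C) S : ℚ)
      = ∑ S ∈ (univ : Finset (Fin n)).powerset,
          (cT n i j S : ℚ) * ((-1 : ℚ) ^ (i - S.card) * (Fintype.card F : ℚ) ^ S.card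
            * (cntM (dualCode C) S : ℚ)) := by
    rw [Finset.sum_comm'
      (s := (univ.powersetCard i).filter (fun T => j ∈ T))
      (t := fun T => T.powerset)
      (t' := (univ : Finset (Fin n)).powerset)
      (s' := fun S => ((univ.powersetCard i).filter (fun T => j ∈ T)).filter
        (fun T => S ⊆ T)) ?_]
    · refine Finset.sum_congr rfl fun S hS => ?_
      rw [Finset.sum_const, cT, nsmul_eq_mul]
    · intro T S
      simp only [Finset.mem_powerset, mem_filter]
      constructor
      · rintro ⟨ha, hb⟩
        exact ⟨⟨ha, hb⟩, Finset.subset_univ S⟩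
      · rintro ⟨⟨ha, hb⟩, _⟩
        exact ⟨ha, hb⟩
  rw [h2]
  have h3 : ∀ S : Finset (Fin n), (cntM (dualCode C) S : ℚ)
      = ∑ y ∈ univ.filter (fun y : Fin n → F => y ∈ dualCode C),
          (if ∀ k ∈ S, y k = 0 then (1 : ℚ) else 0) := by
    intro S
    rw [cntM, ← Finset.filter_filter, Finset.card_filter]
    push_cast
    rfl
  have h4 : ∑ S ∈ (univ : Finset (Fin n)).powerset,
        (cT n i j S : ℚ) * ((-1 : ℚ) ^ (i - S.card) * (Fintype.card F : ℚ) ^ S.card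
          * (cntM (dualCode C) S : ℚ))
      = ∑ y ∈ univ.filter (fun y : Fin n → F => y ∈ dualCode C),
          ∑ S ∈ ((suppF y)ᶜ).powerset,
            (cT n i j S : ℚ) * (-1 : ℚ) ^ (i - S.card) * (Fintype.card F : ℚ) ^ S.card := by
    rw [Finset.sum_congr rfl (fun S _ => by rw [h3 S, Finset.mul_sum, Finset.mul_sum])]
    rw [Finset.sum_comm]
    refine Finset.sum_congr rfl fun y hy => ?_
    have hps : ((univ : Finset (Fin n)).powerset).filter (fun S => ∀ k ∈ S, y k = 0)
        = ((suppF y)ᶜ).powerset := by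
      ext S
      simp only [mem_filter, Finset.mem_powerset, Finset.subset_univ, true_and]
      constructor
      · intro h a ha
        rw [Finset.mem_compl, mem_suppF, not_not]
        exact h a ha
      · intro h k hk
        have := h hk
        rw [Finset.mem_compl, mem_suppF, not_not] at this
        exact this
    rw [← hps, Finset.sum_filter]
    refine Finset.sum_congr rfl fun S _ => ?_
    split_ifs <;> ring
  rw [h4]
  have h5 : ∀ y : Fin n → F,
      ∑ S ∈ ((suppF y)ᶜ).powerset,
          (cT n i j S : ℚ) * (-1 : ℚ) ^ (i - S.card) * (Fintype.card F : ℚ) ^ S.card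
        = if y j ≠ 0 then PPQ (Fintype.card F) n i (hammingNorm y)
          else (1 - (Fintype.card F : ℚ)) * PPQ (Fintype.card F) n i (hammingNorm y + 1) := by
    intro y
    by_cases hyj : y j ≠ 0
    · rw [if_pos hyj, ← card_suppF]
      exact G_in hi (Fintype.card F) j (suppF y) (mem_suppF.mpr hyj)
    · rw [if_neg hyj, ← card_suppF]
      push_neg at hyj
      exact G_out hi (Fintype.card F) j (suppF y)
        (fun h => (mem_suppF.mp h) hyj)
  rw [Finset.sum_congr rfl (fun y _ => h5 y)]
  -- now group by weight and whether y j ≠ 0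
  rw [← Finset.sum_filter_add_sum_filter_not
    (univ.filter (fun y : Fin n → F => y ∈ dualCode C)) (fun y => y j ≠ 0)]
  have pieceA : ∑ y ∈ (univ.filter (fun y : Fin n → F => y ∈ dualCode C)).filter
        (fun y => y j ≠ 0),
        (if y j ≠ 0 then PPQ (Fintype.card F) n i (hammingNorm y)
          else (1 - (Fintype.card F : ℚ)) * PPQ (Fintype.card F) n i (hammingNorm y + 1))
      = ∑ s ∈ range (n + 1), (Wj (dualCode C) s j : ℚ) * PPQ (Fintype.card F) n i s := by
    rw [Finset.sum_congr rfl (fun y hy => by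
      rw [if_pos (Finset.mem_filter.mp hy).2])]
    rw [← Finset.sum_fiberwise_of_maps_to
      (g := hammingNorm) (t := range (n + 1))
      (fun y _ => Finset.mem_range.mpr (by
        have := hammingNorm_le_n y
        omega))]
    refine Finset.sum_congr rfl fun s hs => ?_
    rw [Finset.sum_congr rfl (fun y hy => by
      rw [(Finset.mem_filter.mp hy).2] :
        ∀ y ∈ ((univ.filter (fun y : Fin n → F => y ∈ dualCode C)).filter
          (fun y => y j ≠ 0)).filter (fun y => hammingNorm y = s),
          PPQ (Fintype.card F) n i (hammingNorm y) = PPQ (Fintype.card F) n i s)]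
    rw [Finset.sum_const, nsmul_eq_mul]
    congr 1
    rw [Wj_eq_card]
    norm_cast
    rw [Finset.filter_filter, Finset.filter_filter]
    congr 1
    apply Finset.filter_congr
    intro y _
    tauto
  have pieceB : ∑ y ∈ (univ.filter (fun y : Fin n → F => y ∈ dualCode C)).filter
        (fun y => ¬ y j ≠ 0),
        (if y j ≠ 0 then PPQ (Fintype.card F) n i (hammingNorm y)
          else (1 - (Fintype.card F : ℚ)) * PPQ (Fintype.card F) n i (hammingNorm y + 1))
      = ∑ s ∈ range (n + 1), (cntDz (dualCode C) s j : ℚ)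
          * ((1 - (Fintype.card F : ℚ)) * PPQ (Fintype.card F) n i (s + 1)) := by
    rw [Finset.sum_congr rfl (fun y hy => by
      rw [if_neg (Finset.mem_filter.mp hy).2])]
    rw [← Finset.sum_fiberwise_of_maps_to
      (g := hammingNorm) (t := range (n + 1))
      (fun y _ => Finset.mem_range.mpr (by
        have := hammingNorm_le_n y
        omega))]
    refine Finset.sum_congr rfl fun s hs => ?_
    rw [Finset.sum_congr rfl (fun y hy => by
      rw [(Finset.mem_filter.mp hy).2] :
        ∀ y ∈ ((univ.filter (fun y : Fin n → F => y ∈ dualCode C)).filter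
          (fun y => ¬ y j ≠ 0)).filter (fun y => hammingNorm y = s),
          (1 - (Fintype.card F : ℚ)) * PPQ (Fintype.card F) n i (hammingNorm y + 1)
            = (1 - (Fintype.card F : ℚ)) * PPQ (Fintype.card F) n i (s + 1))]
    rw [Finset.sum_const, nsmul_eq_mul]
    congr 1
    rw [cntDz]
    norm_cast
    rw [Finset.filter_filter, Finset.filter_filter]
    congr 1
    apply Finset.filter_congr
    intro y _
    simp only [not_not]
    tauto
  rw [pieceA, pieceB, ← Finset.sum_add_distrib]

end MasterMain
section SmallFacts

open Finset
open scoped Classical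

variable {F : Type} [Field F] [Fintype F] [DecidableEq F] {n : ℕ}

lemma Wj_zero (U : Submodule F (Fin n → F)) (j : Fin n) : Wj U 0 j = 0 := by
  rw [Wj_eq_card, Finset.card_eq_zero, Finset.eq_empty_iff_forall_notMem]
  intro y hy
  simp only [mem_filter, mem_univ, true_and] at hy
  obtain ⟨-, h2, h3⟩ := hy
  rw [hammingNorm_eq_zero] at h2
  exact h3 (by rw [h2]; rfl)

lemma Wj_top (U : Submodule F (Fin n → F)) (j : Fin n) : Wj U (n + 1) j = 0 := by
  rw [Wj_eq_card, Finset.card_eq_zero, Finset.eq_empty_iff_forall_notMem]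
  intro y hy
  simp only [mem_filter, mem_univ, true_and] at hy
  have := hammingNorm_le_n y
  omega

lemma cntDz_zero (U : Submodule F (Fin n → F)) (j : Fin n) : cntDz U 0 j = 1 := by
  rw [cntDz]
  have : (univ.filter fun y : Fin n → F => y ∈ U ∧ hammingNorm y = 0 ∧ y j = 0)
      = {0} := by
    ext y
    simp only [mem_filter, mem_univ, true_and, Finset.mem_singleton]
    constructor
    · rintro ⟨-, h2, -⟩
      exact hammingNorm_eq_zero.mp h2
    · rintro rfl
      exact ⟨U.zero_mem, by simp [hammingNorm_eq_zero], rfl⟩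
  rw [this, Finset.card_singleton]

lemma cntDz_full (U : Submodule F (Fin n → F)) (j : Fin n) : cntDz U n j = 0 := by
  rw [cntDz, Finset.card_eq_zero, Finset.eq_empty_iff_forall_notMem]
  intro y hy
  simp only [mem_filter, mem_univ, true_and] at hy
  obtain ⟨-, h2, h3⟩ := hy
  have hsupp : suppF y = univ := by
    apply Finset.eq_univ_of_card
    rw [card_suppF, h2, Fintype.card_fin]
  have : j ∈ suppF y := hsupp ▸ Finset.mem_univ j
  exact (mem_suppF.mp this) h3

lemma no_weight_one (C : Submodule F (Fin n → F)) (hnd : ∀ j : Fin n, ∃ x ∈ C, x j ≠ 0)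
    (y : Fin n → F) (hy : y ∈ dualCode C) (h1 : hammingNorm y = 1) : False := by
  have hcard : (suppF y).card = 1 := by rw [card_suppF, h1]
  obtain ⟨t, ht⟩ := Finset.card_eq_one.mp hcard
  obtain ⟨x, hx, hxt⟩ := hnd t
  have hsum := hy x hx
  rw [Finset.sum_eq_single t] at hsum
  · have hyt : y t ≠ 0 := by
      rw [← mem_suppF, ht]
      exact Finset.mem_singleton_self t
    exact hyt (by
      rcases mul_eq_zero.mp hsum with h | h
      · exact absurd h hxt
      · exact h)
  · intro i _ hit
    have : y i = 0 := by
      by_contra hc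
      have : i ∈ suppF y := mem_suppF.mpr hc
      rw [ht, Finset.mem_singleton] at this
      exact hit this
    rw [this, mul_zero]
  · intro h
    exact absurd (Finset.mem_univ t) h

lemma Wj_one (C : Submodule F (Fin n → F)) (hnd : ∀ j : Fin n, ∃ x ∈ C, x j ≠ 0)
    (j : Fin n) : Wj (dualCode C) 1 j = 0 := by
  rw [Wj_eq_card, Finset.card_eq_zero, Finset.eq_empty_iff_forall_notMem]
  intro y hy
  simp only [mem_filter, mem_univ, true_and] at hy
  exact no_weight_one C hnd y hy.1 hy.2.1

lemma cntDz_one (C : Submodule F (Fin n → F)) (hnd : ∀ j : Fin n, ∃ x ∈ C, x j ≠ 0)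
    (j : Fin n) : cntDz (dualCode C) 1 j = 0 := by
  rw [cntDz, Finset.card_eq_zero, Finset.eq_empty_iff_forall_notMem]
  intro y hy
  simp only [mem_filter, mem_univ, true_and] at hy
  exact no_weight_one C hnd y hy.1 hy.2.1

lemma sum_Wj_eq (U : Submodule F (Fin n → F)) (s : ℕ) (hs : 1 ≤ s) (j : Fin n) :
    ∑ t : Fin n, Wj U s t = s * (Wj U s j + cntDz U s j) := by
  have hW : ∀ t : Fin n, Wj U s t
      = #((univ.filter fun y : Fin n → F => y ∈ U ∧ hammingNorm y = s).filter
          fun y => y t ≠ 0) := by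
    intro t
    rw [Wj_eq_card, Finset.filter_filter]
    congr 1
    apply Finset.filter_congr
    intro y _
    tauto
  have h1 : ∑ t : Fin n, Wj U s t
      = ∑ y ∈ univ.filter (fun y : Fin n → F => y ∈ U ∧ hammingNorm y = s),
          (suppF y).card := by
    rw [Finset.sum_congr rfl fun t _ => hW t]
    rw [Finset.sum_congr rfl fun t (_ : t ∈ univ) => Finset.card_filter _ _]
    rw [Finset.sum_comm]
    refine Finset.sum_congr rfl fun y _ => ?_
    rw [suppF, Finset.card_filter]
  rw [h1]
  have h2 : ∀ y ∈ univ.filter (fun y : Fin n → F => y ∈ U ∧ hammingNorm y = s),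
      (suppF y).card = s := by
    intro y hy
    simp only [mem_filter, mem_univ, true_and] at hy
    rw [card_suppF, hy.2]
  rw [Finset.sum_congr rfl h2, Finset.sum_const, smul_eq_mul]
  have hsplit := Finset.card_filter_add_card_filter_not
    (s := univ.filter (fun y : Fin n → F => y ∈ U ∧ hammingNorm y = s))
    (p := fun y => y j ≠ 0)
  have h3 : #(univ.filter (fun y : Fin n → F => y ∈ U ∧ hammingNorm y = s))
      = Wj U s j + cntDz U s j := by
    rw [← hsplit, ← hW j]
    congr 1
    rw [cntDz, Finset.filter_filter]
    congr 1
    apply Finset.filter_congr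
    intro y _
    simp only [not_not]
    tauto
  rw [h3, Nat.mul_comm]

end SmallFacts

section KrawDiff

open Finset

lemma kraw_cast (q n i s : ℕ) : (Kraw q n i s : ℚ)
    = ∑ t ∈ range (i + 1), ((n - t).choose (i - t) : ℚ) * ((n - s).choose t : ℚ)
        * (-1 : ℚ) ^ (i - t) * (q : ℚ) ^ t := by
  rw [Kraw]
  push_cast
  rfl

lemma kraw_diff (q n i : ℕ) (hi1 : 1 ≤ i) (hin : i ≤ n) {s : ℕ} (hs : s < n) :
    (Kraw q n i (s + 1) : ℚ) - (Kraw q n i s : ℚ) = (q : ℚ) * PPQ q n i (s + 1) := by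
  rw [kraw_cast, kraw_cast, ← Finset.sum_sub_distrib]
  have hterm : ∀ t ∈ range (i + 1),
      ((n - t).choose (i - t) : ℚ) * ((n - (s + 1)).choose t : ℚ)
          * (-1 : ℚ) ^ (i - t) * (q : ℚ) ^ t
        - ((n - t).choose (i - t) : ℚ) * ((n - s).choose t : ℚ)
          * (-1 : ℚ) ^ (i - t) * (q : ℚ) ^ t
      = if t = 0 then 0 else
          -(((n - t).choose (i - t) : ℚ) * ((n - s - 1).choose (t - 1) : ℚ)
            * (-1 : ℚ) ^ (i - t) * (q : ℚ) ^ t) := by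
    intro t _
    rcases Nat.eq_zero_or_pos t with rfl | htpos
    · simp
    · obtain ⟨u, rfl⟩ : ∃ u, t = u + 1 := ⟨t - 1, by omega⟩
      rw [if_neg (by omega)]
      have hns : n - s = (n - s - 1) + 1 := by omega
      have hns2 : n - (s + 1) = n - s - 1 := by omega
      have e0 : (u + 1) - 1 = u := rfl
      rw [hns2, hns, Nat.choose_succ_succ, e0]
      push_cast
      ring
  rw [Finset.sum_congr rfl hterm, Finset.sum_range_succ']
  simp only [Nat.succ_ne_zero, if_neg, if_pos, add_zero, reduceIte]
  rw [PPQ, Finset.mul_sum]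
  refine Finset.sum_congr rfl fun u hu => ?_
  simp only [Finset.mem_range] at hu
  have e1 : n - (u + 1) = n - 1 - u := by omega
  have e2 : i - (u + 1) = i - 1 - u := by omega
  have e3 : (u + 1) - 1 = u := rfl
  have e4 : n - (s + 1) = n - s - 1 := by omega
  have hsign : (-1 : ℚ) ^ (i - u) = -(-1 : ℚ) ^ (i - (u + 1)) := by
    have h5 : i - u = (i - (u + 1)) + 1 := by omega
    rw [h5, pow_succ]; ring
  rw [e3, e4, hsign, e1, e2]
  ring

end KrawDiff
section Final

open Finset

lemma final_algebra (n : ℕ) (hn : 1 ≤ n) (K b d P : ℕ → ℚ) (q : ℚ) (hq : q ≠ 0)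
    (hb0 : b 0 = 0) (hd0 : d 0 = 1) (hb1 : b 1 = 0) (hd1 : d 1 = 0)
    (hdn : d n = 0) (hbn1 : b (n + 1) = 0)
    (hP : ∀ s : ℕ, s < n → K (s + 1) - K s = q * P (s + 1)) :
    K 0 * (1 - 1/q) - K 1 / q * (q - 1 + b 2)
      + ∑ s ∈ Finset.Icc 2 n, K s *
          ((b s + d s) - (1/q) * ((q - 1) * d (s-1) + (b s + d s) + b (s+1) + (q-2) * b s))
      = ∑ s ∈ Finset.range (n+1), (b s * P s + d s * ((1 - q) * P (s+1))) := by
  have hsplit : Finset.range (n+1) = insert 0 (insert 1 (Finset.Icc 2 n)) := by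
    ext x
    simp only [Finset.mem_range, Finset.mem_insert, Finset.mem_Icc]
    omega
  have hterm : ∀ s : ℕ, K s *
      ((b s + d s) - (1/q) * ((q - 1) * (if s = 0 then 0 else d (s-1))
        + (b s + d s) + b (s+1) + (q-2) * b s))
      = (b s * P s + d s * ((1 - q) * P (s+1)))
        + ((q-1)/q) * (d s * K (s+1) - K s * (if s = 0 then 0 else d (s-1)))
        + (1/q) * (b s * K (s-1) - K s * b (s+1))
        ∨ True := fun s => Or.inr trivial
  -- pointwise identity
  have hpoint : ∀ s ∈ Finset.range (n+1), K s *
      ((b s + d s) - (1/q) * ((q - 1) * (if s = 0 then 0 else d (s-1))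
        + (b s + d s) + b (s+1) + (q-2) * b s))
      = (b s * P s + d s * ((1 - q) * P (s+1)))
        + ((q-1)/q) * (d s * K (s+1) - K s * (if s = 0 then 0 else d (s-1)))
        + (1/q) * (b s * K (s-1) - K s * b (s+1)) := by
    intro s hs
    rw [Finset.mem_range] at hs
    rcases Nat.eq_zero_or_pos s with rfl | hspos
    · have R2 := hP 0 (by omega)
      have e2 : P (0 + 1) = (K (0 + 1) - K 0) / q := by
        rw [eq_div_iff hq]; linear_combination -R2
      simp only [if_pos rfl, hb0, Nat.zero_sub]
      rw [e2]
      field_simp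
      ring
    · rcases Nat.lt_or_ge s n with hsn | hsn
      · have R1 := hP (s-1) (by omega)
        have hss : s - 1 + 1 = s := by omega
        rw [hss] at R1
        have R2 := hP s (by omega)
        have e1 : P s = (K s - K (s - 1)) / q := by
          rw [eq_div_iff hq]; linear_combination -R1
        have e2 : P (s + 1) = (K (s + 1) - K s) / q := by
          rw [eq_div_iff hq]; linear_combination -R2
        rw [if_neg (by omega), e1, e2]
        field_simp
        ring
      · have hsn' : s = n := by omega
        subst hsn'
        have R1 := hP (s-1) (by omega)
        have hss : s - 1 + 1 = s := by omega
        rw [hss] at R1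
        have e1 : P s = (K s - K (s - 1)) / q := by
          rw [eq_div_iff hq]; linear_combination -R1
        rw [if_neg (by omega), hdn, e1]
        field_simp
        ring
  -- shifts
  have shift1 : ∑ s ∈ Finset.range (n+1), K s * b (s+1)
      = ∑ s ∈ Finset.range (n+1), b s * K (s-1) := by
    rw [Finset.sum_range_succ, hbn1, mul_zero, add_zero]
    have hrhs : ∑ s ∈ Finset.range (n+1), b s * K (s-1)
        = ∑ s ∈ Finset.range n, b (s+1) * K s := by
      rw [Finset.sum_range_succ', hb0, zero_mul, add_zero]
      exact Finset.sum_congr rfl fun s _ => by rw [Nat.add_sub_cancel]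
    rw [hrhs]
    exact Finset.sum_congr rfl fun s _ => mul_comm _ _
  have shift2 : ∑ s ∈ Finset.range (n+1), K s * (if s = 0 then 0 else d (s-1))
      = ∑ s ∈ Finset.range (n+1), d s * K (s+1) := by
    rw [Finset.sum_range_succ']
    simp only [if_pos rfl, mul_zero, add_zero, Nat.succ_ne_zero, if_neg, reduceIte]
    rw [Finset.sum_range_succ, hdn, zero_mul, add_zero]
    exact Finset.sum_congr rfl fun s _ => mul_comm _ _
  -- assemble
  have hLHS : K 0 * (1 - 1/q) - K 1 / q * (q - 1 + b 2)
      + ∑ s ∈ Finset.Icc 2 n, K s *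
          ((b s + d s) - (1/q) * ((q - 1) * d (s-1) + (b s + d s) + b (s+1) + (q-2) * b s))
      = ∑ s ∈ Finset.range (n+1), K s *
          ((b s + d s) - (1/q) * ((q - 1) * (if s = 0 then 0 else d (s-1))
            + (b s + d s) + b (s+1) + (q-2) * b s)) := by
    rw [hsplit, Finset.sum_insert (by simp), Finset.sum_insert (by simp)]
    have h0 : K 0 * ((b 0 + d 0) - (1/q) * ((q - 1) * (if (0:ℕ) = 0 then 0 else d (0-1))
        + (b 0 + d 0) + b (0+1) + (q-2) * b 0)) = K 0 * (1 - 1/q) := by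
      rw [if_pos rfl, hb0, hd0, hb1]
      ring
    have h1 : K 1 * ((b 1 + d 1) - (1/q) * ((q - 1) * (if (1:ℕ) = 0 then 0 else d (1-1))
        + (b 1 + d 1) + b (1+1) + (q-2) * b 1)) = -(K 1 / q * (q - 1 + b 2)) := by
      rw [if_neg one_ne_zero, hb1, hd1]
      show K 1 * ((0 + 0) - (1/q) * ((q - 1) * d 0 + (0 + 0) + b 2 + (q-2) * 0))
        = -(K 1 / q * (q - 1 + b 2))
      rw [hd0]
      field_simp
      ring
    rw [h0, h1]
    have hIcc : ∀ s ∈ Finset.Icc 2 n, K s *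
        ((b s + d s) - (1/q) * ((q - 1) * d (s-1) + (b s + d s) + b (s+1) + (q-2) * b s))
        = K s * ((b s + d s) - (1/q) * ((q - 1) * (if s = 0 then 0 else d (s-1))
            + (b s + d s) + b (s+1) + (q-2) * b s)) := by
      intro s hs
      rw [Finset.mem_Icc] at hs
      rw [if_neg (by omega)]
    rw [Finset.sum_congr rfl hIcc]
    ring
  rw [hLHS, Finset.sum_congr rfl hpoint]
  rw [Finset.sum_add_distrib, Finset.sum_add_distrib]
  have hc1 : ∑ s ∈ Finset.range (n+1),
      ((q-1)/q) * (d s * K (s+1) - K s * (if s = 0 then 0 else d (s-1))) = 0 := by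
    rw [← Finset.mul_sum, Finset.sum_sub_distrib]
    rw [shift2]
    simp
  have hc2 : ∑ s ∈ Finset.range (n+1),
      (1/q) * (b s * K (s-1) - K s * b (s+1)) = 0 := by
    rw [← Finset.mul_sum, Finset.sum_sub_distrib]
    rw [← shift1]
    simp
  rw [hc1, hc2, add_zero, add_zero]

end Final
/-- MacWilliams-type identity: for a non-degenerate linear code `C ≤ F_q^n` and all
`1 ≤ i, j ≤ n`, `W_i^j(C)` is determined by the `W_a^b(C^⊥)`. -/
theorem stmt_8 {F : Type} [Field F] [Fintype F] [DecidableEq F] {n : ℕ}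
    (C : Submodule F (Fin n → F)) (hC : C ≠ ⊥)
    (hnd : ∀ j : Fin n, ∃ x ∈ C, x j ≠ 0)
    (i : ℕ) (hi1 : 1 ≤ i) (hin : i ≤ n) (j : Fin n) :
    (Wj C i j : ℚ) = (1 / (Nat.card (dualCode C) : ℚ)) *
      ( (Kraw (Fintype.card F) n i 0 : ℚ) * (1 - 1 / (Fintype.card F : ℚ))
        - (Kraw (Fintype.card F) n i 1 : ℚ) / (Fintype.card F : ℚ)
            * ((Fintype.card F : ℚ) - 1 + (Wj (dualCode C) 2 j : ℚ))
        + ∑ s ∈ Finset.Icc 2 n, (Kraw (Fintype.card F) n i s : ℚ) *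
            ( (∑ t : Fin n, (Wj (dualCode C) s t : ℚ)) / (s : ℚ)
              - (1 / (Fintype.card F : ℚ)) *
                ( ((Fintype.card F : ℚ) - 1) *
                    ((∑ t : Fin n, (Wj (dualCode C) (s - 1) t : ℚ)) / ((s : ℚ) - 1)
                      - (Wj (dualCode C) (s - 1) j : ℚ))
                  + (∑ t : Fin n, (Wj (dualCode C) s t : ℚ)) / (s : ℚ)
                  + (Wj (dualCode C) (s + 1) j : ℚ)
                  + ((Fintype.card F : ℚ) - 2) * (Wj (dualCode C) s j : ℚ) ) ) ) := by
  classical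
  have hn : 1 ≤ n := le_trans hi1 hin
  have hq0 : (Fintype.card F : ℚ) ≠ 0 := by
    exact_mod_cast Fintype.card_ne_zero (α := F)
  have hD0 : (Nat.card (dualCode C) : ℚ) ≠ 0 := by
    have : 0 < Nat.card (dualCode C) := Nat.card_pos
    positivity
  have hb0 : (Wj (dualCode C) 0 j : ℚ) = 0 := by rw [Wj_zero]; norm_num
  have hd0 : (cntDz (dualCode C) 0 j : ℚ) = 1 := by rw [cntDz_zero]; norm_num
  have hb1 : (Wj (dualCode C) 1 j : ℚ) = 0 := by rw [Wj_one C hnd j]; norm_num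
  have hd1 : (cntDz (dualCode C) 1 j : ℚ) = 0 := by rw [cntDz_one C hnd j]; norm_num
  have hdn : (cntDz (dualCode C) n j : ℚ) = 0 := by rw [cntDz_full]; norm_num
  have hbn1 : (Wj (dualCode C) (n + 1) j : ℚ) = 0 := by rw [Wj_top]; norm_num
  have hP : ∀ s : ℕ, s < n →
      (Kraw (Fintype.card F) n i (s + 1) : ℚ) - (Kraw (Fintype.card F) n i s : ℚ)
        = (Fintype.card F : ℚ) * PPQ (Fintype.card F) n i (s + 1) :=
    fun s hs => kraw_diff (Fintype.card F) n i hi1 hin hs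
  have halg := final_algebra n hn
    (fun s => (Kraw (Fintype.card F) n i s : ℚ))
    (fun s => (Wj (dualCode C) s j : ℚ))
    (fun s => (cntDz (dualCode C) s j : ℚ))
    (fun s => PPQ (Fintype.card F) n i s)
    (Fintype.card F : ℚ) hq0 hb0 hd0 hb1 hd1 hdn hbn1 hP
  have hconv : ∀ s ∈ Finset.Icc 2 n,
      (Kraw (Fintype.card F) n i s : ℚ) *
        ( (∑ t : Fin n, (Wj (dualCode C) s t : ℚ)) / (s : ℚ)
          - (1 / (Fintype.card F : ℚ)) *
            ( ((Fintype.card F : ℚ) - 1) *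
                ((∑ t : Fin n, (Wj (dualCode C) (s - 1) t : ℚ)) / ((s : ℚ) - 1)
                  - (Wj (dualCode C) (s - 1) j : ℚ))
              + (∑ t : Fin n, (Wj (dualCode C) s t : ℚ)) / (s : ℚ)
              + (Wj (dualCode C) (s + 1) j : ℚ)
              + ((Fintype.card F : ℚ) - 2) * (Wj (dualCode C) s j : ℚ) ) )
      = (Kraw (Fintype.card F) n i s : ℚ) *
          (((Wj (dualCode C) s j : ℚ) + (cntDz (dualCode C) s j : ℚ))
            - (1 / (Fintype.card F : ℚ)) *
              (((Fintype.card F : ℚ) - 1) * (cntDz (dualCode C) (s - 1) j : ℚ)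
                + ((Wj (dualCode C) s j : ℚ) + (cntDz (dualCode C) s j : ℚ))
                + (Wj (dualCode C) (s + 1) j : ℚ)
                + ((Fintype.card F : ℚ) - 2) * (Wj (dualCode C) s j : ℚ))) := by
    intro s hs
    rw [Finset.mem_Icc] at hs
    have h1 : ∑ t : Fin n, (Wj (dualCode C) s t : ℚ)
        = (s : ℚ) * ((Wj (dualCode C) s j : ℚ) + (cntDz (dualCode C) s j : ℚ)) := by
      exact_mod_cast congrArg (Nat.cast : ℕ → ℚ)
        (sum_Wj_eq (dualCode C) s (by omega) j)
    have h2 : ∑ t : Fin n, (Wj (dualCode C) (s - 1) t : ℚ)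
        = ((s - 1 : ℕ) : ℚ)
          * ((Wj (dualCode C) (s - 1) j : ℚ) + (cntDz (dualCode C) (s - 1) j : ℚ)) := by
      exact_mod_cast congrArg (Nat.cast : ℕ → ℚ)
        (sum_Wj_eq (dualCode C) (s - 1) (by omega) j)
    have hcast : ((s : ℚ) - 1) = ((s - 1 : ℕ) : ℚ) := by
      rw [Nat.cast_sub (by omega : 1 ≤ s)]
      norm_num
    have hsq : (s : ℚ) ≠ 0 := by
      have : (0 : ℚ) < s := by exact_mod_cast (by omega : 0 < s)
      positivity
    have hs1q : ((s - 1 : ℕ) : ℚ) ≠ 0 := by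
      have : (0 : ℚ) < ((s - 1 : ℕ) : ℚ) := by exact_mod_cast (by omega : 0 < s - 1)
      positivity
    rw [h1, hcast, h2]
    field_simp
    ring
  rw [Finset.sum_congr rfl hconv, halg, ← master C hin j, one_div,
    inv_mul_cancel_left₀ hD0]
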